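/- The number of linear extensions of a finite trunk is the product of the factorials of its level sizes: if P is a finite partial order with n elements in which incomparability is transitive, then the number of bijections f : P → Fin n with x < y implying f x < f y equals ∏_k (t_k)!, where t_k is the number of elements of P of level k. -/

import Mathlib

/-- Two elements of a partial order are incomparable if neither is `≤` the other. -/
def Incomp {P : Type*} [PartialOrder P] (x y : P) : Prop := x ≠ y ∧ ¬x ≤ y ∧ ¬y ≤ x

/-- The level of an element `x` of a finite partial order: one less than the maximum
cardinality of a chain whose greatest element is `x`. -/
noncomputable def level {P : Type*} [PartialOrder P] [Fintype P] (x : P) : ℕ :=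
  sSup {n : ℕ | ∃ C : Finset P,
    IsChain (· ≤ ·) (C : Set P) ∧ x ∈ C ∧ (∀ y ∈ C, y ≤ x) ∧ C.card = n} - 1

namespace TrunkAux
variable {P : Type*} [PartialOrder P] [Fintype P]

set_option linter.unusedSectionVars false
def chainSet (x : P) : Set ℕ := {n : ℕ | ∃ C : Finset P,
    IsChain (· ≤ ·) (C : Set P) ∧ x ∈ C ∧ (∀ y ∈ C, y ≤ x) ∧ C.card = n}

lemma level_def (x : P) : level x = sSup (chainSet x) - 1 := rfl

lemma one_mem_chainSet (x : P) : 1 ∈ chainSet x := by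
  refine ⟨{x}, ?_, by simp, by simp, by simp⟩
  simp [IsChain, Set.Pairwise]

lemma chainSet_bddAbove (x : P) : BddAbove (chainSet x) := by
  refine ⟨Fintype.card P, fun m hm => ?_⟩
  obtain ⟨C, -, -, -, hcard⟩ := hm
  simpa [hcard] using Finset.card_le_univ C

lemma one_le_sSup (x : P) : 1 ≤ sSup (chainSet x) :=
  le_csSup (chainSet_bddAbove x) (one_mem_chainSet x)

lemma sSup_chainSet (x : P) : sSup (chainSet x) = level x + 1 := by
  have := one_le_sSup x
  rw [level_def]; omega

lemma level_lt_card (x : P) : level x < Fintype.card P := by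
  have h1 := one_le_sSup x
  have h2 : sSup (chainSet x) ≤ Fintype.card P :=
    csSup_le ⟨1, one_mem_chainSet x⟩ (fun m hm => by
      obtain ⟨C, -, -, -, hcard⟩ := hm
      simpa [hcard] using Finset.card_le_univ C)
  rw [level_def]
  have h3 : 1 ≤ Fintype.card P := Fintype.card_pos_iff.2 ⟨x⟩
  omega

lemma exists_max_chain (x : P) : ∃ C : Finset P,
    IsChain (· ≤ ·) (C : Set P) ∧ x ∈ C ∧ (∀ y ∈ C, y ≤ x) ∧ C.card = level x + 1 := by
  have : sSup (chainSet x) ∈ chainSet x :=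
    Nat.sSup_mem ⟨1, one_mem_chainSet x⟩ (chainSet_bddAbove x)
  rw [sSup_chainSet] at this
  exact this

lemma mem_chainSet_le {x : P} {m : ℕ} (hm : m ∈ chainSet x) : m ≤ level x + 1 := by
  have := le_csSup (chainSet_bddAbove x) hm
  rwa [sSup_chainSet] at this

lemma level_lt_level {x y : P} (h : x < y) : level x < level y := by
  classical
  obtain ⟨C, hC, hxC, hle, hcard⟩ := exists_max_chain x
  have hyC : y ∉ C := fun hy => absurd (hle y hy) h.not_ge
  have hmem : (level x + 2) ∈ chainSet y := by
    refine ⟨insert y C, ?_, Finset.mem_insert_self _ _, ?_, ?_⟩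
    · rw [Finset.coe_insert]
      exact hC.insert (fun b hb _ => Or.inr ((hle b hb).trans h.le))
    · intro z hz
      rcases Finset.mem_insert.1 hz with rfl | hz
      · exact le_rfl
      · exact (hle z hz).trans h.le
    · rw [Finset.card_insert_of_notMem hyC, hcard]
  have := mem_chainSet_le hmem
  omega

end TrunkAux

namespace TrunkAux
set_option linter.unusedSectionVars false
variable {P : Type*} [PartialOrder P] [Fintype P]

lemma incomp_symm {x y : P} (h : Incomp x y) : Incomp y x :=
  ⟨h.1.symm, h.2.2, h.2.1⟩

variable (hP : ∀ x y z : P, x ≠ z → Incomp x y → Incomp y z → Incomp x z)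

include hP

lemma level_le_of_incomp {x y : P} (h : Incomp x y) : level x ≤ level y := by
  classical
  obtain ⟨C, hC, hxC, hle, hcard⟩ := exists_max_chain x
  have hlt : ∀ c ∈ C.erase x, c < y := by
    intro c hc
    have hcx : c < x := lt_of_le_of_ne (hle c (Finset.mem_of_mem_erase hc))
      (Finset.ne_of_mem_erase hc)
    by_cases hcy : c ≤ y
    · refine lt_of_le_of_ne hcy ?_
      rintro rfl
      exact h.2.2 hcx.le
    · by_cases hyc : y ≤ c
      · exact absurd (hyc.trans hcx.le) h.2.2
      · have hcny : c ≠ y := by rintro rfl; exact hcy le_rfl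
        have : Incomp c x := hP c y x hcx.ne ⟨hcny, hcy, hyc⟩ (incomp_symm h)
        exact absurd hcx.le this.2.1
  have hyC : y ∉ C.erase x := fun hy => absurd (hlt y hy) (lt_irrefl y)
  have hmem : (level x + 1) ∈ chainSet y := by
    refine ⟨insert y (C.erase x), ?_, Finset.mem_insert_self _ _, ?_, ?_⟩
    · rw [Finset.coe_insert]
      refine IsChain.insert (hC.mono ?_) (fun b hb _ => Or.inr (hlt b hb).le)
      intro z hz
      exact Finset.mem_coe.2 (Finset.mem_of_mem_erase (Finset.mem_coe.1 hz))
    · intro z hz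
      rcases Finset.mem_insert.1 hz with rfl | hz
      · exact le_rfl
      · exact (hlt z hz).le
    · rw [Finset.card_insert_of_notMem hyC, Finset.card_erase_of_mem hxC, hcard]
      omega
  have := mem_chainSet_le hmem
  omega

lemma level_eq_of_incomp {x y : P} (h : Incomp x y) : level x = level y :=
  le_antisymm (level_le_of_incomp hP h) (level_le_of_incomp hP (incomp_symm h))

lemma lt_iff_level_lt {x y : P} : x < y ↔ level x < level y := by
  constructor
  · exact level_lt_level
  · intro h
    by_cases hxy : x ≤ y
    · exact lt_of_le_of_ne hxy (by rintro rfl; exact lt_irrefl _ h)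
    · by_cases hyx : y ≤ x
      · have : y < x := lt_of_le_of_ne hyx (by rintro rfl; exact lt_irrefl _ h)
        exact absurd (level_lt_level this) (by omega)
      · have hne : x ≠ y := by rintro rfl; exact lt_irrefl _ h
        exact absurd (level_eq_of_incomp hP ⟨hne, hxy, hyx⟩) (by omega)

end TrunkAux

namespace TrunkAux
open Finset
open scoped Classical
set_option linter.unusedSectionVars false
variable {P : Type*} [PartialOrder P] [Fintype P]

noncomputable def rk (x : P) : ℕ := (univ.filter fun z : P => level z < level x).card
noncomputable def tk (x : P) : ℕ := (univ.filter fun z : P => level z = level x).card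
noncomputable def bk (x : P) : ℕ := (univ.filter fun z : P => level x < level z).card

lemma rtb (x : P) : rk x + tk x + bk x = Fintype.card P := by
  have h := Finset.card_filter_add_card_filter_not
    (s := (univ : Finset P)) (p := fun z => level z < level x)
  have h2 := Finset.card_filter_add_card_filter_not
    (s := (univ : Finset P).filter (fun z => ¬ level z < level x))
    (p := fun z => level z = level x)
  rw [Finset.filter_filter, Finset.filter_filter] at h2
  have e1 : ((univ : Finset P).filter fun z => ¬level z < level x ∧ level z = level x)
      = (univ : Finset P).filter fun z => level z = level x := by
    ext z; simp; omega
  have e2 : ((univ : Finset P).filter fun z => ¬level z < level x ∧ ¬level z = level x)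
      = (univ : Finset P).filter fun z => level x < level z := by
    ext z; simp; omega
  rw [e1, e2] at h2
  rw [Finset.card_univ] at h
  simp only [rk, tk, bk]
  omega

lemma rt_eq (x : P) : rk x + tk x = ((univ : Finset P).filter fun z => level z ≤ level x).card := by
  have e : ((univ : Finset P).filter fun z => level z ≤ level x)
      = ((univ : Finset P).filter fun z => level z < level x)
        ∪ ((univ : Finset P).filter fun z => level z = level x) := by
    ext z; simp; omega
  rw [e, Finset.card_union_of_disjoint]
  · rfl
  · rw [Finset.disjoint_left]; intro z hz hz'; simp at hz hz'; omega

lemma rt_le {x y : P} (h : level y < level x) : rk y + tk y ≤ rk x := by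
  rw [rt_eq]
  apply Finset.card_le_card
  intro z hz; simp at hz ⊢; omega

variable (hP : ∀ x y z : P, x ≠ z → Incomp x y → Incomp y z → Incomp x z)

include hP

lemma rk_le {f : P → Fin (Fintype.card P)} (hfb : Function.Bijective f)
    (hfm : ∀ x y : P, x < y → f x < f y) (x : P) : rk x ≤ (f x : ℕ) := by
  have : rk x ≤ (Finset.range (f x : ℕ)).card := by
    apply Finset.card_le_card_of_injOn (fun z => (f z : ℕ))
    · intro z hz
      simp only [Finset.mem_coe, Finset.mem_filter] at hz
      have : z < x := (lt_iff_level_lt hP).2 hz.2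
      simpa using hfm z x this
    · intro a _ b _ hab
      exact hfb.1 (Fin.ext hab)
  simpa using this

lemma lt_rt {f : P → Fin (Fintype.card P)} (hfb : Function.Bijective f)
    (hfm : ∀ x y : P, x < y → f x < f y) (x : P) : (f x : ℕ) < rk x + tk x := by
  have hb : bk x ≤ (Finset.Ico ((f x : ℕ) + 1) (Fintype.card P)).card := by
    apply Finset.card_le_card_of_injOn (fun z => (f z : ℕ))
    · intro z hz
      simp only [Finset.mem_coe, Finset.mem_filter] at hz
      have : x < z := (lt_iff_level_lt hP).2 hz.2
      have := hfm x z this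
      simp only [Finset.mem_coe, Finset.mem_Ico]
      exact ⟨this, (f z).2⟩
    · intro a _ b _ hab
      exact hfb.1 (Fin.ext hab)
  rw [Nat.card_Ico] at hb
  have h1 := rtb x
  have h2 : (f x : ℕ) < Fintype.card P := (f x).2
  omega

end TrunkAux

namespace TrunkAux
open Finset
open scoped Classical
set_option linter.unusedSectionVars false
variable {P : Type*} [PartialOrder P] [Fintype P]

noncomputable def key (x : P) : ℕ :=
  Fintype.card P * level x + (Fintype.equivFin P x : ℕ)

lemma key_inj : Function.Injective (key (P := P)) := by
  intro a b h
  have hpos : 0 < Fintype.card P := Fintype.card_pos_iff.2 ⟨a⟩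
  have ha : (Fintype.equivFin P a : ℕ) < Fintype.card P := (Fintype.equivFin P a).2
  have hb : (Fintype.equivFin P b : ℕ) < Fintype.card P := (Fintype.equivFin P b).2
  have hl : level a = level b := by
    have h1 := congrArg (· / Fintype.card P) h
    simpa [key, Nat.mul_add_div hpos, Nat.div_eq_of_lt, ha, hb] using h1
  have he : (Fintype.equivFin P a : ℕ) = (Fintype.equivFin P b : ℕ) := by
    simp only [key, hl] at h; omega
  exact (Fintype.equivFin P).injective (Fin.ext he)

lemma key_lt_key {x y : P} (h : level x < level y) : key x < key y := by
  have ha : (Fintype.equivFin P x : ℕ) < Fintype.card P := (Fintype.equivFin P x).2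
  calc key x < Fintype.card P * (level x + 1) := by rw [Nat.mul_succ]; exact Nat.add_lt_add_left ha _
    _ ≤ Fintype.card P * level y := Nat.mul_le_mul_left _ h
    _ ≤ key y := Nat.le_add_right _ _

noncomputable def rankOf (x : P) : ℕ := (univ.filter fun z : P => key z < key x).card

lemma rankOf_lt_rankOf {x y : P} (h : key x < key y) : rankOf x < rankOf y := by
  apply Finset.card_lt_card
  constructor
  · intro z hz; simp at hz ⊢; omega
  · intro hsub
    have hx : x ∈ (univ : Finset P).filter fun z => key z < key y := by simp [h]
    have := hsub hx
    simp at this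
  
lemma rankOf_lt_card (x : P) : rankOf x < Fintype.card P := by
  rw [← Finset.card_univ]
  apply Finset.card_lt_card
  rw [Finset.ssubset_univ_iff]
  intro hEq
  have : x ∈ (univ : Finset P).filter fun z => key z < key x := by rw [hEq]; simp
  simp at this

noncomputable def f0 : P ≃ Fin (Fintype.card P) :=
  Equiv.ofBijective (fun x => ⟨rankOf x, rankOf_lt_card x⟩)
    (by
      rw [Fintype.bijective_iff_injective_and_card]
      refine ⟨?_, by simp⟩
      intro a b hab
      by_contra hne
      have hk : key a ≠ key b := fun h => hne (key_inj h)
      rcases Nat.lt_or_ge (key a) (key b) with h | h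
      · exact absurd (congrArg Fin.val hab) (Nat.ne_of_lt (rankOf_lt_rankOf h))
      · have : key b < key a := lt_of_le_of_ne h (Ne.symm hk)
        exact absurd (congrArg Fin.val hab).symm (Nat.ne_of_lt (rankOf_lt_rankOf this)))

lemma f0_mono {x y : P} (h : x < y) : f0 x < f0 y := by
  have := rankOf_lt_rankOf (key_lt_key (level_lt_level h))
  simpa [f0, Fin.lt_def, Equiv.ofBijective] using this

end TrunkAux

namespace TrunkAux
open Finset
open scoped Classical
set_option linter.unusedSectionVars false
variable {P : Type*} [PartialOrder P] [Fintype P]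
variable (hP : ∀ x y z : P, x ≠ z → Incomp x y → Incomp y z → Incomp x z)

include hP

lemma level_f0_symm {f : P → Fin (Fintype.card P)} (hfb : Function.Bijective f)
    (hfm : ∀ x y : P, x < y → f x < f y) (x : P) :
    level (f0.symm (f x)) = level x := by
  set y := f0.symm (f x) with hy
  have hfy : (f0 y : ℕ) = (f x : ℕ) := by rw [hy, Equiv.apply_symm_apply]
  have hb1 := rk_le hP (f := fun z => f0 z) f0.bijective (fun a b h => f0_mono h) y
  have hb2 := lt_rt hP (f := fun z => f0 z) f0.bijective (fun a b h => f0_mono h) y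
  have hb3 := rk_le hP hfb hfm x
  have hb4 := lt_rt hP hfb hfm x
  rcases Nat.lt_trichotomy (level y) (level x) with h | h | h
  · have := rt_le h
    omega
  · exact h
  · have := rt_le h
    omega

end TrunkAux

namespace TrunkAux
open Finset
open scoped Classical
set_option linter.unusedSectionVars false
variable {P : Type*} [PartialOrder P] [Fintype P]

noncomputable def levFin (x : P) : Fin (Fintype.card P) := ⟨level x, level_lt_card x⟩

lemma pi_congr (π : ∀ k : Fin (Fintype.card P), Equiv.Perm {x : P // levFin x = k})
    {k k' : Fin (Fintype.card P)} (h : k = k') {z : P} (hz : levFin z = k)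
    (hz' : levFin z = k') : (↑(π k ⟨z, hz⟩) : P) = ↑(π k' ⟨z, hz'⟩) := by
  subst h; rfl

noncomputable def permEquivPi :
    {σ : Equiv.Perm P // ∀ x : P, level (σ x) = level x} ≃
      ∀ k : Fin (Fintype.card P), Equiv.Perm {x : P // levFin x = k} where
  toFun σ k := σ.1.subtypePerm (fun x => by
    have : levFin (σ.1 x) = levFin x := Fin.ext (σ.2 x)
    rw [this])
  invFun π := by
    refine ⟨Equiv.ofBijective (fun x => ↑(π (levFin x) ⟨x, rfl⟩)) ?_, ?_⟩
    · rw [Fintype.bijective_iff_injective_and_card]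
      refine ⟨?_, rfl⟩
      intro a b hab
      replace hab : (↑(π (levFin a) ⟨a, rfl⟩) : P) = ↑(π (levFin b) ⟨b, rfl⟩) := hab
      have h1 : levFin (↑(π (levFin a) ⟨a, rfl⟩) : P) = levFin a := (π (levFin a) ⟨a, rfl⟩).2
      have h2 : levFin (↑(π (levFin b) ⟨b, rfl⟩) : P) = levFin b := (π (levFin b) ⟨b, rfl⟩).2
      have hl : levFin a = levFin b := by rw [← h1, ← h2, hab]
      have : (↑(π (levFin a) ⟨a, rfl⟩) : P) = ↑(π (levFin a) ⟨b, hl.symm⟩) := by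
        rw [hab]; exact pi_congr π hl.symm rfl hl.symm
      have := (π (levFin a)).injective (Subtype.coe_injective this)
      exact congrArg Subtype.val this
    · intro x
      exact congrArg Fin.val ((π (levFin x) ⟨x, rfl⟩).2 : levFin _ = levFin x)
  left_inv σ := by
    apply Subtype.ext
    apply Equiv.ext
    intro x
    rfl
  right_inv π := by
    funext k
    apply Equiv.ext
    rintro ⟨x, hx⟩
    apply Subtype.ext
    exact pi_congr π hx rfl hx

variable (hP : ∀ x y z : P, x ≠ z → Incomp x y → Incomp y z → Incomp x z)

noncomputable def extEquivPerm :
    {f : P → Fin (Fintype.card P) // Function.Bijective f ∧ ∀ x y : P, x < y → f x < f y} ≃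
      {σ : Equiv.Perm P // ∀ x : P, level (σ x) = level x} where
  toFun f := ⟨(Equiv.ofBijective f.1 f.2.1).trans f0.symm,
    fun x => level_f0_symm hP f.2.1 f.2.2 x⟩
  invFun σ := ⟨fun x => f0 (σ.1 x), f0.bijective.comp σ.1.bijective,
    fun x y h => f0_mono ((lt_iff_level_lt hP).2 (by
      rw [σ.2 x, σ.2 y]; exact (lt_iff_level_lt hP).1 h))⟩
  left_inv f := by
    apply Subtype.ext
    funext x
    simp
  right_inv σ := by
    apply Subtype.ext
    apply Equiv.ext
    intro x
    simp

end TrunkAux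


/-- The number of linear extensions of a finite trunk (a partial order with transitive
incomparability) on `n` elements equals the product of the factorials of its level
sizes. -/
theorem trunk_card_linearExtensions
    {P : Type*} [PartialOrder P] [Fintype P]
    (hP : ∀ x y z : P, x ≠ z → Incomp x y → Incomp y z → Incomp x z) :
    Nat.card {f : P → Fin (Fintype.card P) //
        Function.Bijective f ∧ ∀ x y : P, x < y → f x < f y} =
      ∏ k ∈ Finset.range (Fintype.card P),
        Nat.factorial ({x : P | level x = k}.ncard) := by
  classical
  open TrunkAux in
  calc Nat.card {f : P → Fin (Fintype.card P) //
        Function.Bijective f ∧ ∀ x y : P, x < y → f x < f y}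
      = Fintype.card (∀ k : Fin (Fintype.card P), Equiv.Perm {x : P // levFin x = k}) := by
        rw [Nat.card_congr ((extEquivPerm hP).trans permEquivPi), Nat.card_eq_fintype_card]
    _ = ∏ k : Fin (Fintype.card P), (Fintype.card {x : P // levFin x = k}).factorial := by
        rw [Fintype.card_pi]
        exact Finset.prod_congr rfl fun k _ => Fintype.card_perm
    _ = ∏ k : Fin (Fintype.card P), ({x : P | level x = (k : ℕ)}.ncard).factorial := by
        refine Finset.prod_congr rfl fun k _ => ?_
        congr 1
        rw [← Nat.card_coe_set_eq, Nat.card_eq_fintype_card]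
        exact Fintype.card_congr (Equiv.subtypeEquivRight fun x => by
          simp [levFin, Fin.ext_iff, Set.mem_setOf_eq])
    _ = ∏ k ∈ Finset.range (Fintype.card P), Nat.factorial ({x : P | level x = k}.ncard) :=
        Fin.prod_univ_eq_prod_range (fun m => Nat.factorial ({x : P | level x = m}.ncard)) (Fintype.card P)
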